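/- For every natural number K there exists a unique real polynomial p that is even (p(−X) = p(X)), has degree at most 2K, and satisfies p^{(k)}(1) = (−1)^k · k! for every k with 0 ≤ k ≤ K. -/

import Mathlib

/-!
Uniqueness: the difference `d` of two solutions is even, of degree at most `2K`, and vanishes to
order `K + 1` at `1`, hence by evenness also at `-1`; so `(X - 1)^(K+1) (X + 1)^(K+1)`, of degree
`2K + 2`, divides `d`, and `d = 0`.

Existence, by induction on `K`: adding a multiple of the even polynomial `(X² - 1)^(K+1)` leaves
the derivatives of order `≤ K` at `1` unchanged, while its `(K+1)`-st derivative at `1` is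
`(K+1)! 2^(K+1) ≠ 0`, so the next condition can be met.
-/

open Nat Polynomial

namespace Polynomial

section CommRing

variable {R : Type*} [CommRing R]

theorem iterate_derivative_eval_eq_zero_of_pow_dvd {p : R[X]} {a : R} {n k : ℕ}
    (h : (X - C a) ^ n ∣ p) (hk : k < n) : (derivative^[k] p).eval a = 0 := by
  obtain ⟨q, hq⟩ := pow_sub_dvd_iterate_derivative_of_pow_dvd k h
  rw [hq, eval_mul, eval_pow, eval_sub, eval_X, eval_C, sub_self,
    zero_pow (Nat.sub_ne_zero_of_lt hk), zero_mul]

theorem iterate_derivative_X_sub_C_pow_mul_eval (a : R) (n : ℕ) (q : R[X]) :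
    (derivative^[n] ((X - C a) ^ n * q)).eval a = n ! * q.eval a := by
  rw [← factorial_smul_hasseDeriv, LinearMap.smul_apply, eval_smul, ← taylor_coeff, taylor_mul,
    taylor_pow, map_sub, taylor_X, taylor_C, add_sub_cancel_right, coeff_X_pow_mul',
    if_pos le_rfl, Nat.sub_self, taylor_coeff_zero, nsmul_eq_mul]

theorem X_add_C_pow_dvd_of_comp_neg_X_eq {p : R[X]} (hp : p.comp (-X) = p) {a : R} {n : ℕ}
    (h : (X - C a) ^ n ∣ p) : (X + C a) ^ n ∣ p := by
  have h' := _root_.map_dvd (compRingHom (-X)) h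
  rw [coe_compRingHom_apply, coe_compRingHom_apply, hp, pow_comp, sub_comp, X_comp, C_comp,
    ← neg_add', neg_pow] at h'
  exact (dvd_mul_left _ _).trans h'

theorem X_sq_sub_C_sq_pow_eq (a : R) (n : ℕ) :
    (X ^ 2 - C (a ^ 2)) ^ n = (X - C a) ^ n * (X + C a) ^ n := by
  rw [← mul_pow, map_pow]
  ring

theorem iterate_derivative_X_sq_sub_C_sq_pow_eval_of_lt (a : R) {n k : ℕ} (hk : k < n) :
    (derivative^[k] ((X ^ 2 - C (a ^ 2)) ^ n)).eval a = 0 :=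
  iterate_derivative_eval_eq_zero_of_pow_dvd
    (X_sq_sub_C_sq_pow_eq a n ▸ dvd_mul_right _ _) hk

theorem iterate_derivative_X_sq_sub_C_sq_pow_eval (a : R) (n : ℕ) :
    (derivative^[n] ((X ^ 2 - C (a ^ 2)) ^ n)).eval a = n ! * (2 * a) ^ n := by
  rw [X_sq_sub_C_sq_pow_eq, iterate_derivative_X_sub_C_pow_mul_eval, eval_pow, eval_add, eval_X,
    eval_C, two_mul]

end CommRing

section Field

variable {F : Type*} [Field F] [CharZero F]

theorem eq_zero_of_comp_neg_X_eq_of_iterate_derivative_eval_eq_zero {p : F[X]} {a : F}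
    (ha : a ≠ 0) {K : ℕ} (hp : p.comp (-X) = p) (hdeg : p.natDegree ≤ 2 * K)
    (hder : ∀ k ≤ K, (derivative^[k] p).eval a = 0) : p = 0 := by
  by_contra hp0
  have hminus : (X - C a) ^ (K + 1) ∣ p :=
    (le_rootMultiplicity_iff hp0).mp <|
      (lt_rootMultiplicity_iff_isRoot_iterate_derivative hp0).mpr hder
  have hplus := X_add_C_pow_dvd_of_comp_neg_X_eq hp hminus
  have hcop : IsCoprime ((X - C a) ^ (K + 1)) ((X + C a) ^ (K + 1)) := by
    have : IsCoprime (X - C a) (X - C (-a)) :=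
      isCoprime_X_sub_C_of_isUnit_sub (by simpa [← two_mul] using ha)
    simpa only [map_neg, sub_neg_eq_add] using this.pow
  have hprod : ((X - C a) ^ (K + 1) * (X + C a) ^ (K + 1)).natDegree = 2 * K + 2 := by
    rw [natDegree_mul (pow_ne_zero _ (X_sub_C_ne_zero a)) (pow_ne_zero _ (X_add_C_ne_zero a)),
      natDegree_pow, natDegree_pow, natDegree_X_sub_C, natDegree_X_add_C]
    ring
  have := natDegree_le_of_dvd (hcop.mul_dvd hminus hplus) hp0
  omega

theorem exists_comp_neg_X_eq_iterate_derivative_eval_eq {a : F} (ha : a ≠ 0) (K : ℕ)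
    (c : ℕ → F) :
    ∃ p : F[X], p.comp (-X) = p ∧ p.natDegree ≤ 2 * K ∧
      ∀ k ≤ K, (derivative^[k] p).eval a = c k := by
  induction K with
  | zero => exact ⟨C (c 0), by simp, by simp, fun k hk => by simp [Nat.le_zero.mp hk]⟩
  | succ K ih =>
    obtain ⟨p, hp, hdeg, hder⟩ := ih
    set g : F[X] := (X ^ 2 - C (a ^ 2)) ^ (K + 1)
    have hg_deg : g.natDegree ≤ 2 * (K + 1) := by
      refine natDegree_pow_le.trans ?_
      rw [natDegree_X_pow_sub_C, mul_comm]
    have hne : ((K + 1)! * (2 * a) ^ (K + 1) : F) ≠ 0 :=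
      mul_ne_zero (Nat.cast_ne_zero.mpr (K + 1).factorial_ne_zero)
        (pow_ne_zero _ (mul_ne_zero two_ne_zero ha))
    obtain ⟨b, hb⟩ : ∃ b : F,
        (derivative^[K + 1] p).eval a + b * ((K + 1)! * (2 * a) ^ (K + 1)) = c (K + 1) :=
      ⟨(c (K + 1) - (derivative^[K + 1] p).eval a) / ((K + 1)! * (2 * a) ^ (K + 1)),
        by rw [div_mul_cancel₀ _ hne, add_sub_cancel]⟩
    refine ⟨p + C b * g, ?_, ?_, ?_⟩
    · simp [g, hp]
    · exact (natDegree_add_le _ _).trans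
        (max_le (by omega) ((natDegree_C_mul_le _ _).trans hg_deg))
    · intro k hk
      rw [iterate_map_add, eval_add, iterate_derivative_C_mul, eval_mul, eval_C]
      rcases hk.lt_or_eq with hk | rfl
      · rw [iterate_derivative_X_sq_sub_C_sq_pow_eval_of_lt a hk, mul_zero, add_zero,
          hder k (Nat.lt_succ_iff.mp hk)]
      · rw [iterate_derivative_X_sq_sub_C_sq_pow_eval, hb]

end Field

end Polynomial

theorem stmt_4 (K : ℕ) :
    ∃! p : Polynomial ℝ,
      p.comp (-Polynomial.X) = p ∧
      p.degree ≤ (2 * K : ℕ) ∧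
      ∀ k : ℕ, k ≤ K →
        (Polynomial.derivative^[k] p).eval 1 = (-1 : ℝ) ^ k * (Nat.factorial k : ℝ) := by
  obtain ⟨p, hp, hdeg, hder⟩ := exists_comp_neg_X_eq_iterate_derivative_eval_eq one_ne_zero K
    fun k => (-1 : ℝ) ^ k * (k ! : ℝ)
  refine ⟨p, ⟨hp, natDegree_le_iff_degree_le.mp hdeg, hder⟩, ?_⟩
  rintro q ⟨hq, hqdeg, hqder⟩
  rw [← sub_eq_zero]
  refine eq_zero_of_comp_neg_X_eq_of_iterate_derivative_eval_eq_zero one_ne_zero (K := K) ?_ ?_ ?_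
  · rw [sub_comp, hq, hp]
  · exact (natDegree_sub_le _ _).trans (max_le (natDegree_le_iff_degree_le.mpr hqdeg) hdeg)
  · intro k hk
    rw [iterate_derivative_sub, eval_sub, hqder k hk, hder k hk, sub_self]
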